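/- Let λ ∈ ℝ and ε > 0. The critical points of the polynomial function f(x,y,z) = x³ − xz² + y²z + λz² + εx are exactly the two points (λ, 0, √(3λ² + ε)) and (λ, 0, −√(3λ² + ε)); both are nondegenerate, the Morse index at the point with positive z-coordinate is 1, and the Morse index at the point with negative z-coordinate is 2. -/

import Mathlib

/-!
The gradient of `f` is `(3x² - z² + ε, 2yz, -2xz + y² + 2λz)`. At a critical point
`z² = 3x² + ε > 0`, so `z ≠ 0`, which forces `y = 0` and then `x = λ`, `z² = 3λ² + ε`.

At `(λ, 0, t)` the Hessian is `[[6λ, 0, -2t], [0, 2t, 0], [-2t, 0, 0]]`, with determinant `-8t³`.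
For a nonsingular symmetric matrix the determinant has the sign `(-1) ^ (number of negative
eigenvalues)`, and a positive (negative) diagonal entry rules out that all eigenvalues are
negative (positive), because each diagonal entry is a convex combination of the eigenvalues.
For `t > 0` this leaves exactly one negative eigenvalue out of three, for `t < 0` exactly two.
-/

open MvPolynomial Matrix

/-- The Hessian matrix of a polynomial in three real variables at a point. -/
noncomputable def hess3 (f : MvPolynomial (Fin 3) ℝ) (p : Fin 3 → ℝ) :
    Matrix (Fin 3) (Fin 3) ℝ :=
  Matrix.of fun i j => eval p (pderiv i (pderiv j f))

/-- A point of ℝ³ is a critical point of a polynomial in three variables if all three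
partial derivatives vanish there. -/
def IsCriticalPt3 (f : MvPolynomial (Fin 3) ℝ) (p : Fin 3 → ℝ) : Prop :=
  ∀ i, eval p (pderiv i f) = 0

/-- The Morse index at a point: the number of negative eigenvalues (with multiplicity)
of the Hessian matrix there (junk value 0 if the Hessian is not symmetric). -/
noncomputable def morseIndex3 (f : MvPolynomial (Fin 3) ℝ) (p : Fin 3 → ℝ) : ℕ :=
  if h : (hess3 f p).IsHermitian then {i : Fin 3 | h.eigenvalues i < 0}.ncard else 0

/-- The polynomial f(x,y,z) = x³ − xz² + y²z + λz² + εx. -/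
noncomputable def fTwo (lam ε : ℝ) : MvPolynomial (Fin 3) ℝ :=
  X 0 ^ 3 - X 0 * X 2 ^ 2 + X 1 ^ 2 * X 2 + C lam * X 2 ^ 2 + C ε * X 0

open Finset in
theorem Finset.prod_pos_iff_even_card_filter_neg {ι R : Type*} [CommRing R] [LinearOrder R]
    [IsStrictOrderedRing R] (s : Finset ι) (f : ι → R) (hf : ∀ i ∈ s, f i ≠ 0) :
    0 < ∏ i ∈ s, f i ↔ Even #{i ∈ s | f i < 0} := by
  have hneg : ∏ i ∈ s with f i < 0, f i =
      (-1) ^ #{i ∈ s | f i < 0} * ∏ i ∈ s with f i < 0, -f i := by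
    rw [prod_neg, ← mul_assoc, ← pow_add, ← two_mul, pow_mul, neg_one_sq, one_pow, one_mul]
  have hneg_pos : 0 < ∏ i ∈ s with f i < 0, -f i :=
    prod_pos fun i hi => neg_pos.mpr (mem_filter.mp hi).2
  have hrest_pos : 0 < ∏ i ∈ s with ¬f i < 0, f i :=
    prod_pos fun i hi => (not_lt.mp (mem_filter.mp hi).2).lt_of_ne' (hf i (mem_filter.mp hi).1)
  rw [← prod_filter_mul_prod_filter_not s (fun i => f i < 0), hneg, mul_assoc,
    mul_pos_iff_of_pos_right (mul_pos hneg_pos hrest_pos)]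
  rcases Nat.even_or_odd #{i ∈ s | f i < 0} with h | h
  · simp [h, h.neg_one_pow]
  · simp [Nat.not_even_iff_odd.mpr h, h.neg_one_pow]

namespace Matrix.IsHermitian

variable {n : Type*} [Fintype n] [DecidableEq n] {A : Matrix n n ℝ} (hA : A.IsHermitian)

theorem diag_eq_sum_eigenvalues_mul_sq (j : n) :
    A j j = ∑ k, hA.eigenvalues k * (hA.eigenvectorUnitary : Matrix n n ℝ) j k ^ 2 := by
  conv_lhs => rw [hA.spectral_theorem]
  simp only [RCLike.ofReal_real_eq_id, CompTriple.comp_eq, Unitary.conjStarAlgAut_apply,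
    mul_apply, eigenvectorUnitary_apply, diagonal_apply, mul_ite, mul_zero, Finset.sum_ite_eq',
    Finset.mem_univ, if_true, star_apply, star_trivial]
  exact Finset.sum_congr rfl fun k _ => by ring

theorem exists_eigenvalues_pos_of_diag_pos {j : n} (hj : 0 < A j j) :
    ∃ i, 0 < hA.eigenvalues i := by
  by_contra! h
  rw [hA.diag_eq_sum_eigenvalues_mul_sq] at hj
  exact hj.not_ge <|
    Finset.sum_nonpos fun k _ => mul_nonpos_of_nonpos_of_nonneg (h k) (sq_nonneg _)

theorem exists_eigenvalues_neg_of_diag_neg {j : n} (hj : A j j < 0) :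
    ∃ i, hA.eigenvalues i < 0 := by
  by_contra! h
  rw [hA.diag_eq_sum_eigenvalues_mul_sq] at hj
  exact hj.not_ge <| Finset.sum_nonneg fun k _ => mul_nonneg (h k) (sq_nonneg _)

theorem det_pos_iff_even_ncard_eigenvalues_neg (hdet : A.det ≠ 0) :
    0 < A.det ↔ Even {i | hA.eigenvalues i < 0}.ncard := by
  rw [hA.det_eq_prod_eigenvalues] at hdet ⊢
  simp only [RCLike.ofReal_real_eq_id, id] at hdet ⊢
  rw [Finset.prod_pos_iff_even_card_filter_neg _ _ (Finset.prod_ne_zero_iff.mp hdet),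
    ← Set.ncard_coe_finset, Finset.coe_filter]
  simp

theorem ncard_eigenvalues_neg_lt_of_diag_pos {j : n} (hj : 0 < A j j) :
    {i | hA.eigenvalues i < 0}.ncard < Fintype.card n := by
  obtain ⟨i, hi⟩ := hA.exists_eigenvalues_pos_of_diag_pos hj
  rw [← Nat.card_eq_fintype_card]
  exact Set.ncard_lt_card fun h => hi.not_gt (Set.eq_univ_iff_forall.mp h i)

theorem ncard_eigenvalues_neg_pos_of_diag_neg {j : n} (hj : A j j < 0) :
    0 < {i | hA.eigenvalues i < 0}.ncard := by
  obtain ⟨i, hi⟩ := hA.exists_eigenvalues_neg_of_diag_neg hj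
  exact (Set.ncard_pos (Set.toFinite _)).mpr ⟨i, hi⟩

end Matrix.IsHermitian

theorem morseIndex3_eq_one {f : MvPolynomial (Fin 3) ℝ} {p : Fin 3 → ℝ}
    (hH : (hess3 f p).IsHermitian) (hdet : (hess3 f p).det < 0) {j : Fin 3}
    (hj : 0 < hess3 f p j j) : morseIndex3 f p = 1 := by
  rw [morseIndex3, dif_pos hH]
  have hodd := (hH.det_pos_iff_even_ncard_eigenvalues_neg hdet.ne).not.mp hdet.not_gt
  have hlt := hH.ncard_eigenvalues_neg_lt_of_diag_pos hj
  rw [Fintype.card_fin] at hlt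
  rw [Nat.not_even_iff_odd, Nat.odd_iff] at hodd
  omega

theorem morseIndex3_eq_two {f : MvPolynomial (Fin 3) ℝ} {p : Fin 3 → ℝ}
    (hH : (hess3 f p).IsHermitian) (hdet : 0 < (hess3 f p).det) {j : Fin 3}
    (hj : hess3 f p j j < 0) : morseIndex3 f p = 2 := by
  rw [morseIndex3, dif_pos hH]
  have heven := (hH.det_pos_iff_even_ncard_eigenvalues_neg hdet.ne').mp hdet
  have hpos := hH.ncard_eigenvalues_neg_pos_of_diag_neg hj
  have hle : {i | hH.eigenvalues i < 0}.ncard ≤ 3 := (Set.ncard_le_card _).trans_eq (by simp)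
  rw [Nat.even_iff] at heven
  omega

theorem MvPolynomial.pderiv_ofNat {σ R : Type*} [CommSemiring R] (i : σ) (n : ℕ)
    [n.AtLeastTwo] : pderiv i (ofNat(n) : MvPolynomial σ R) = 0 := by
  rw [← Nat.cast_ofNat]
  exact (pderiv i).map_natCast n

theorem pderiv_zero_fTwo (lam ε : ℝ) :
    pderiv 0 (fTwo lam ε) = 3 * X 0 ^ 2 - X 2 ^ 2 + C ε := by
  simp [fTwo]

theorem pderiv_one_fTwo (lam ε : ℝ) : pderiv 1 (fTwo lam ε) = 2 * X 1 * X 2 := by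
  simp [fTwo, mul_comm, mul_left_comm]

theorem pderiv_two_fTwo (lam ε : ℝ) :
    pderiv 2 (fTwo lam ε) = -2 * X 0 * X 2 + X 1 ^ 2 + 2 * C lam * X 2 := by
  simp [fTwo, mul_comm, mul_assoc, mul_left_comm]

theorem hess3_fTwo (lam ε : ℝ) (p : Fin 3 → ℝ) :
    hess3 (fTwo lam ε) p =
      !![6 * p 0, 0, -2 * p 2; 0, 2 * p 2, 2 * p 1; -2 * p 2, 2 * p 1, 2 * lam - 2 * p 0] := by
  ext i j
  fin_cases i <;> fin_cases j <;>
    simp [hess3, pderiv_ofNat, pderiv_zero_fTwo, pderiv_one_fTwo, pderiv_two_fTwo] <;> ring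

theorem isCriticalPt3_fTwo_iff (lam ε : ℝ) (p : Fin 3 → ℝ) :
    IsCriticalPt3 (fTwo lam ε) p ↔
      3 * p 0 ^ 2 - p 2 ^ 2 + ε = 0 ∧ 2 * p 1 * p 2 = 0 ∧
        -2 * p 0 * p 2 + p 1 ^ 2 + 2 * lam * p 2 = 0 := by
  simp [IsCriticalPt3, Fin.forall_fin_succ, pderiv_zero_fTwo, pderiv_one_fTwo, pderiv_two_fTwo]

theorem isHermitian_hess3_fTwo (lam ε : ℝ) (p : Fin 3 → ℝ) :
    (hess3 (fTwo lam ε) p).IsHermitian := by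
  rw [hess3_fTwo, IsHermitian, conjTranspose_eq_transpose_of_trivial]
  ext i j
  fin_cases i <;> fin_cases j <;> rfl

theorem det_hess3_fTwo (lam ε t : ℝ) : (hess3 (fTwo lam ε) ![lam, 0, t]).det = -8 * t ^ 3 := by
  rw [hess3_fTwo, det_fin_three]
  simp only [Fin.isValue, cons_val_zero, cons_val, neg_mul, cons_val_one, mul_zero, sub_self,
    of_apply, cons_val', cons_val_fin_one, mul_neg, zero_mul, neg_zero, add_zero, neg_neg, zero_sub,
    neg_inj]
  ring

theorem fTwo_critical_eqns_iff {lam ε x y z : ℝ} (hε : 0 < ε) :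
    (3 * x ^ 2 - z ^ 2 + ε = 0 ∧ 2 * y * z = 0 ∧ -2 * x * z + y ^ 2 + 2 * lam * z = 0) ↔
      x = lam ∧ y = 0 ∧ z ^ 2 = 3 * lam ^ 2 + ε := by
  constructor
  · rintro ⟨hx, hy, hz⟩
    have hz0 : z ≠ 0 := by rintro rfl; nlinarith [sq_nonneg x]
    have hy0 : y = 0 := by simpa [hz0] using hy
    subst hy0
    have hxl : x = lam := by
      have : (lam - x) * (2 * z) = 0 := by linarith
      simpa [hz0, sub_eq_zero, eq_comm] using this
    subst hxl
    exact ⟨rfl, rfl, by linarith⟩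
  · rintro ⟨rfl, rfl, hz⟩
    exact ⟨by linarith, by ring, by ring⟩

theorem isCriticalPt3_fTwo_iff_eq {lam ε : ℝ} (hε : 0 < ε) (p : Fin 3 → ℝ) :
    IsCriticalPt3 (fTwo lam ε) p ↔
      p = ![lam, 0, Real.sqrt (3 * lam ^ 2 + ε)] ∨
        p = ![lam, 0, -Real.sqrt (3 * lam ^ 2 + ε)] := by
  have hz : p 2 ^ 2 = 3 * lam ^ 2 + ε ↔
      p 2 = Real.sqrt (3 * lam ^ 2 + ε) ∨ p 2 = -Real.sqrt (3 * lam ^ 2 + ε) := by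
    rw [← sq_eq_sq_iff_eq_or_eq_neg, Real.sq_sqrt (by positivity)]
  rw [isCriticalPt3_fTwo_iff, fTwo_critical_eqns_iff hε, hz]
  simp only [Fin.isValue, funext_iff, Fin.forall_fin_succ, cons_val_zero, cons_val_succ,
    Fin.succ_zero_eq_one, cons_val_fin_one, Fin.succ_one_eq_two, IsEmpty.forall_iff, and_true]
  tauto

theorem critical_points_fTwo (lam ε : ℝ) (hε : 0 < ε) :
    (∀ p : Fin 3 → ℝ, IsCriticalPt3 (fTwo lam ε) p ↔
      p = ![lam, 0, Real.sqrt (3 * lam ^ 2 + ε)] ∨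
      p = ![lam, 0, -Real.sqrt (3 * lam ^ 2 + ε)]) ∧
    (hess3 (fTwo lam ε) ![lam, 0, Real.sqrt (3 * lam ^ 2 + ε)]).det ≠ 0 ∧
    (hess3 (fTwo lam ε) ![lam, 0, -Real.sqrt (3 * lam ^ 2 + ε)]).det ≠ 0 ∧
    morseIndex3 (fTwo lam ε) ![lam, 0, Real.sqrt (3 * lam ^ 2 + ε)] = 1 ∧
    morseIndex3 (fTwo lam ε) ![lam, 0, -Real.sqrt (3 * lam ^ 2 + ε)] = 2 := by
  set s := Real.sqrt (3 * lam ^ 2 + ε)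
  have hs : 0 < s := Real.sqrt_pos.mpr (by positivity)
  have hdet_s : (hess3 (fTwo lam ε) ![lam, 0, s]).det < 0 := by
    rw [det_hess3_fTwo]; nlinarith [pow_pos hs 3]
  have hdet_neg_s : 0 < (hess3 (fTwo lam ε) ![lam, 0, -s]).det := by
    rw [det_hess3_fTwo]; nlinarith [pow_pos hs 3]
  refine ⟨isCriticalPt3_fTwo_iff_eq hε, hdet_s.ne, hdet_neg_s.ne',
    morseIndex3_eq_one (isHermitian_hess3_fTwo _ _ _) hdet_s (j := 1) ?_,
    morseIndex3_eq_two (isHermitian_hess3_fTwo _ _ _) hdet_neg_s (j := 1) ?_⟩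
  all_goals simpa [hess3_fTwo] using hs
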